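/- arXiv:1510.02122 — 5 statements merged into one kernel-verified Lean document; each statement's English description precedes it below -/
import Mathlib

section
/- Let f be a symmetric bounded affine permutation of type (n,2n). Then for every i ∈ [2n], R(I_i(f)) = I_{i'+1}(f), where i' = 2n+1−i, the subscript i'+1 is taken modulo 2n (with representative in [2n]), and I_a(f) denotes the a-anti-exceedance set of f. -/
/-- `R(I) = [2n] \ {2n+1-i : i ∈ I}` for subsets of `[2n] = {1,…,2n}`. -/
noncomputable def Rset (n : ℕ) (I : Finset ℤ) : Finset ℤ :=
  (Finset.Icc (1 : ℤ) (2 * (n : ℤ))) \ (I.image fun x => 2 * (n : ℤ) + 1 - x)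

/-- A bounded affine permutation of type `(k,n)`. -/
def IsBAP (n k : ℕ) (f : ℤ → ℤ) : Prop :=
  Function.Bijective f ∧
  (∀ i : ℤ, f (i + (n : ℤ)) = f i + (n : ℤ)) ∧
  (∀ i : ℤ, i ≤ f i ∧ f i ≤ i + (n : ℤ)) ∧
  (∑ i ∈ Finset.Icc (1 : ℤ) (n : ℤ), (f i - i)) = (k : ℤ) * (n : ℤ)

/-- A bounded affine permutation of type `(n,2n)` is symmetric if
`f(2n+1-a) = 4n+1-f(a)` for all integers `a`. -/
def IsSymmBAP (n : ℕ) (f : ℤ → ℤ) : Prop :=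
  ∀ a : ℤ, f (2 * (n : ℤ) + 1 - a) = 4 * (n : ℤ) + 1 - f a

/-- `f̄(i)`: the representative in `[1,n]` of `f(i)` modulo `n`. -/
def fbar (n : ℕ) (f : ℤ → ℤ) (i : ℤ) : ℤ := (f i - 1) % (n : ℤ) + 1

open scoped Classical in
/-- The `a`-anti-exceedance set `I_a(f) = {i ∈ [n] : f̄⁻¹(i) >_a i or f(i) = i+n}`,
where `x ≤_a y ↔ (x-a) mod n ≤ (y-a) mod n` is the cyclic shift of the order on `[1,n]`. -/
noncomputable def antiExc (n : ℕ) (f : ℤ → ℤ) (a : ℤ) : Finset ℤ :=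
  (Finset.Icc (1 : ℤ) (n : ℤ)).filter fun i =>
    f i = i + (n : ℤ) ∨
      ∃ j ∈ Finset.Icc (1 : ℤ) (n : ℤ),
        fbar n f j = i ∧ (i - a) % (n : ℤ) < (j - a) % (n : ℤ)

/-- A Grassmann necklace of type `(k,n)`, encoded as an `n`-periodic family of
`k`-subsets of `[1,n]` indexed by `ℤ`. -/
def IsGN (n k : ℕ) (I : ℤ → Finset ℤ) : Prop :=
  (∀ i : ℤ, I (i + (n : ℤ)) = I i) ∧
  ∀ i ∈ Finset.Icc (1 : ℤ) (n : ℤ),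
    I i ⊆ Finset.Icc (1 : ℤ) (n : ℤ) ∧ (I i).card = k ∧
    (i ∈ I i → ∃ j ∈ Finset.Icc (1 : ℤ) (n : ℤ), I (i + 1) = insert j ((I i).erase i)) ∧
    (i ∉ I i → I (i + 1) = I i)

/-- `f` is the bounded affine permutation associated to the Grassmann necklace `I`:
`f̄(i) = j` if `I_{i+1} = (I_i ∖ {i}) ∪ {j}` with `j ≠ i`; `f(i) = i` if `I_{i+1} = I_i`
and `i ∉ I_i`; `f(i) = i+n` if `I_{i+1} = I_i` and `i ∈ I_i`. -/
def GNAssoc (n : ℕ) (I : ℤ → Finset ℤ) (f : ℤ → ℤ) : Prop :=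
  ∀ i ∈ Finset.Icc (1 : ℤ) (n : ℤ),
    (I (i + 1) = I i → i ∉ I i → f i = i) ∧
    (I (i + 1) = I i → i ∈ I i → f i = i + (n : ℤ)) ∧
    (I (i + 1) ≠ I i → fbar n f i ≠ i ∧ I (i + 1) = insert (fbar n f i) ((I i).erase i))

/-- A dual Grassmann necklace of type `(k,n)`, encoded as an `n`-periodic family of
`k`-subsets of `[1,n]` indexed by `ℤ`. -/
def IsDGN (n k : ℕ) (J : ℤ → Finset ℤ) : Prop :=
  (∀ i : ℤ, J (i + (n : ℤ)) = J i) ∧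
  ∀ i ∈ Finset.Icc (1 : ℤ) (n : ℤ),
    J i ⊆ Finset.Icc (1 : ℤ) (n : ℤ) ∧ (J i).card = k ∧
    (i ∈ J (i + 1) → ∃ j ∈ Finset.Icc (1 : ℤ) (n : ℤ), J i = insert j ((J (i + 1)).erase i)) ∧
    (i ∉ J (i + 1) → J i = J (i + 1))

/-- `f` is the bounded affine permutation associated to the dual Grassmann necklace `J`:
`f̄⁻¹(i) = j` if `J_i = (J_{i+1} ∖ {i}) ∪ {j}` with `j ≠ i`; `f(i) = i` if `J_i = J_{i+1}`
and `i ∉ J_{i+1}`; `f(i) = i+n` if `J_i = J_{i+1}` and `i ∈ J_{i+1}`. -/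
def DGNAssoc (n : ℕ) (J : ℤ → Finset ℤ) (f : ℤ → ℤ) : Prop :=
  ∀ i ∈ Finset.Icc (1 : ℤ) (n : ℤ),
    (J i = J (i + 1) → i ∉ J (i + 1) → f i = i) ∧
    (J i = J (i + 1) → i ∈ J (i + 1) → f i = i + (n : ℤ)) ∧
    (J i ≠ J (i + 1) →
      ∃ j ∈ Finset.Icc (1 : ℤ) (n : ℤ),
        j ≠ i ∧ fbar n f j = i ∧ J i = insert j ((J (i + 1)).erase i))

/-- The minor `Δ_I`: determinant of the `k×k` matrix whose columns are the columns `v i`,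
`i ∈ I`, in increasing order (and `0` if `I` does not have exactly `k` elements). -/
noncomputable def Delta {k : ℕ} (v : ℤ → Fin k → ℝ) (I : Finset ℤ) : ℝ :=
  if h : I.card = k then
    Matrix.det (Matrix.of fun r c : Fin k => v (I.orderIsoOfFin h c).1 r)
  else 0

/-- The `k×n` matrix with columns `v 1, …, v n` is totally nonnegative:
it has (full) rank `k` and all maximal minors are nonnegative. -/
def IsTNN (n k : ℕ) (v : ℤ → Fin k → ℝ) : Prop :=
  Submodule.span ℝ (v '' Set.Icc (1 : ℤ) (n : ℤ)) = ⊤ ∧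
  ∀ I ⊆ Finset.Icc (1 : ℤ) (n : ℤ), I.card = k → 0 ≤ Delta v I

/-- `f` is the span-permutation of the periodically extended column family `v`:
`f(i) = min {r ≥ i : v i ∈ span (v (i+1), …, v r)}` (the empty span being `{0}`). -/
def IsSpanPerm {k : ℕ} (v : ℤ → Fin k → ℝ) (f : ℤ → ℤ) : Prop :=
  ∀ i : ℤ, i ≤ f i ∧ v i ∈ Submodule.span ℝ (v '' Set.Ioc i (f i)) ∧
    ∀ r : ℤ, i ≤ r → v i ∈ Submodule.span ℝ (v '' Set.Ioc i r) → f i ≤ r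

/-- `g(i) = max {r ≤ i : v i ∈ span (v r, …, v (i-1))}` (the empty span being `{0}`). -/
def IsRevSpanPerm {k : ℕ} (v : ℤ → Fin k → ℝ) (g : ℤ → ℤ) : Prop :=
  ∀ i : ℤ, g i ≤ i ∧ v i ∈ Submodule.span ℝ (v '' Set.Ico (g i) i) ∧
    ∀ r : ℤ, r ≤ i → v i ∈ Submodule.span ℝ (v '' Set.Ico r i) → r ≤ g i

/-- The matroid `𝓜(M) = {I : Δ_I(M) ≠ 0}` of the `k×n` matrix with columns `v 1, …, v n`. -/
def Mat (n k : ℕ) (v : ℤ → Fin k → ℝ) : Set (Finset ℤ) :=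
  {I | I ⊆ Finset.Icc (1 : ℤ) (n : ℤ) ∧ I.card = k ∧ Delta v I ≠ 0}

/-- `I ≤_a J` for subsets of `[1,n]`: elementwise comparison, after sorting each set in
`≤_a`-increasing order, in the cyclically shifted order `x ≤_a y ↔ (x-a) mod n ≤ (y-a) mod n`. -/
def cycLE (n : ℕ) (a : ℤ) (I J : Finset ℤ) : Prop :=
  List.Forall₂ (· ≤ ·)
    ((I.image fun x => (x - a) % (n : ℤ)).sort (· ≤ ·))
    ((J.image fun x => (x - a) % (n : ℤ)).sort (· ≤ ·))

/-- `Ia` is the `≤_a`-minimal element of the matroid of `v` (i.e. `Ia = I_a(M)`). -/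
def IsCycMin (n k : ℕ) (v : ℤ → Fin k → ℝ) (a : ℤ) (Ia : Finset ℤ) : Prop :=
  Ia ∈ Mat n k v ∧ ∀ J ∈ Mat n k v, cycLE n a Ia J

/-- The columns of `M · xᵢ(c)`, extended `n`-periodically: column `j` with `j ≡ i+1 (mod n)`
becomes `v j + c • v (j-1)`; all other columns are unchanged. -/
def bridgeCol (n : ℕ) (i : ℤ) (c : ℝ) {k : ℕ} (v : ℤ → Fin k → ℝ) : ℤ → Fin k → ℝ :=
  fun j => if (j - (i + 1)) % (n : ℤ) = 0 then v j + c • v (j - 1) else v j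

/-- The `n×2n` matrix with columns `v 1, …, v (2n)` is Plücker-symmetric:
`Δ_{R(I)} = Δ_I` for every `n`-element subset `I ⊆ [2n]`. -/
def PSym (n : ℕ) (v : ℤ → Fin n → ℝ) : Prop :=
  ∀ I ⊆ Finset.Icc (1 : ℤ) (2 * (n : ℤ)), I.card = n → Delta v (Rset n I) = Delta v I

/-- The affine simple transposition `sᵢ` modulo `n`: swaps `j ↔ j+1` for every `j ≡ i (mod n)`
and fixes all other integers. -/
def affS (n : ℕ) (i : ℤ) (j : ℤ) : ℤ :=
  if (j - i) % (n : ℤ) = 0 then j + 1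
  else if (j - (i + 1)) % (n : ℤ) = 0 then j - 1
  else j

/-! For `m ∈ [2n]` write `m' = 2n+1-m` and let `j = f̄⁻¹(m)`. Symmetry gives `f̄⁻¹(m') = j'`
and `f(m') = m'+2n ↔ f(m) = m`, while `x ↦ x'` turns `<_i` into the reverse of `<_{i'+1}`.
So `m' ∈ I_i(f)` iff `f(m) = m` or `j <_{i'+1} m`, and `m ∈ I_{i'+1}(f)` iff `f(m) = m+2n` or
`m <_{i'+1} j`. Since `j = m` exactly when `f(m) ∈ {m, m+2n}`, the two conditions are
complementary. -/

open Finset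

lemma eq_of_modEq_of_mem_Icc {N a b : ℤ} (h : a ≡ b [ZMOD N]) (ha : a ∈ Icc 1 N)
    (hb : b ∈ Icc 1 N) : a = b := by
  rw [mem_Icc] at ha hb
  have := Int.eq_zero_of_abs_lt_dvd (Int.modEq_iff_dvd.1 h) (abs_lt.2 ⟨by omega, by omega⟩)
  omega

lemma neg_one_sub_emod {N : ℤ} (hN : 0 < N) (x : ℤ) : (-1 - x) % N = N - 1 - x % N := by
  have hx := Int.mul_ediv_add_emod x N
  have hlt := Int.emod_lt_of_pos x hN
  have hnonneg := Int.emod_nonneg x hN.ne'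
  rw [show -1 - x = (N - 1 - x % N) + N * (-(x / N) - 1) by linarith,
    Int.add_mul_emod_self_left, Int.emod_eq_of_lt (by linarith) (by linarith)]

lemma reflect_emod_lt_iff {N : ℤ} (hN : 0 < N) (i x y : ℤ) :
    (N + 1 - x - i) % N < (N + 1 - y - i) % N ↔ (y - (N + 2 - i)) % N < (x - (N + 2 - i)) % N := by
  have reflect (z : ℤ) : (N + 1 - z - i) % N = N - 1 - (z - (N + 2 - i)) % N := by
    rw [← neg_one_sub_emod hN]; ring_nf
  rw [reflect, reflect]
  omega

section AffinePermutation

variable {N : ℕ} {f : ℤ → ℤ}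

lemma map_add_mul (hper : ∀ x, f (x + N) = f x + N) (x c : ℤ) :
    f (x + N * c) = f x + N * c := by
  have hdisp : Function.Periodic (fun x => f x - x) (N : ℤ) := fun x => by
    change f (x + N) - (x + N) = f x - x
    rw [hper]; ring
  have : f (x + c * N) - (x + c * N) = f x - x := hdisp.int_mul c x
  rw [mul_comm c] at this
  linarith

lemma map_modEq_map (hper : ∀ x, f (x + N) = f x + N) {a b : ℤ} (h : a ≡ b [ZMOD N]) :
    f a ≡ f b [ZMOD N] := by
  obtain ⟨t, rfl⟩ := Int.modEq_iff_add_fac.1 h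
  exact Int.modEq_iff_add_fac.2 ⟨t, map_add_mul hper a t⟩

lemma modEq_of_map_modEq (hinj : Function.Injective f) (hper : ∀ x, f (x + N) = f x + N)
    {a b : ℤ} (h : f a ≡ f b [ZMOD N]) : a ≡ b [ZMOD N] := by
  obtain ⟨t, ht⟩ := Int.modEq_iff_add_fac.1 h
  exact Int.modEq_iff_add_fac.2 ⟨t, hinj (by rw [ht, map_add_mul hper])⟩

lemma fbar_eq_fbar_iff {j k : ℤ} : fbar N f j = fbar N f k ↔ f j ≡ f k [ZMOD N] := by
  rw [fbar, fbar, add_left_inj]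
  exact ⟨fun h => by simpa using Int.ModEq.add_right 1 h, fun h => h.sub_right 1⟩

lemma fbar_eq_iff_modEq {x m : ℤ} (hm : m ∈ Icc 1 (N : ℤ)) :
    fbar N f x = m ↔ f x ≡ m [ZMOD N] := by
  rw [mem_Icc] at hm
  have hm_res : m - 1 = (m - 1) % N := (Int.emod_eq_of_lt (by omega) (by omega)).symm
  rw [fbar, ← eq_sub_iff_add_eq, hm_res]
  exact ⟨fun h => by simpa using Int.ModEq.add_right 1 h, fun h => h.sub_right 1⟩

lemma fbar_injOn (hinj : Function.Injective f) (hper : ∀ x, f (x + N) = f x + N) :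
    Set.InjOn (fbar N f) (Icc 1 (N : ℤ)) := fun _ hj _ hk h =>
  eq_of_modEq_of_mem_Icc (modEq_of_map_modEq hinj hper (fbar_eq_fbar_iff.1 h)) hj hk

lemma exists_fbar_eq (hsurj : Function.Surjective f) (hper : ∀ x, f (x + N) = f x + N)
    {m : ℤ} (hm : m ∈ Icc 1 (N : ℤ)) :
    ∃ j ∈ Icc 1 (N : ℤ), fbar N f j = m := by
  obtain ⟨y, rfl⟩ := hsurj m
  have hN : 0 < (N : ℤ) := by rw [mem_Icc] at hm; omega
  refine ⟨(y - 1) % N + 1, ?_, ?_⟩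
  · rw [mem_Icc]
    constructor <;> linarith [Int.emod_nonneg (y - 1) hN.ne', Int.emod_lt_of_pos (y - 1) hN]
  · rw [fbar_eq_iff_modEq hm]
    exact map_modEq_map hper (by simpa using (Int.mod_modEq (y - 1) N).add_right 1)

lemma fbar_self_iff (hbd : ∀ x, x ≤ f x ∧ f x ≤ x + N) {m : ℤ} (hm : m ∈ Icc 1 (N : ℤ)) :
    fbar N f m = m ↔ f m = m ∨ f m = m + N := by
  rw [fbar_eq_iff_modEq hm, Int.modEq_iff_dvd]
  obtain ⟨hlow, hupp⟩ := hbd m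
  constructor
  · intro hdvd
    by_cases htop : f m = m + N
    · exact Or.inr htop
    · have := Int.eq_zero_of_abs_lt_dvd hdvd (abs_lt.2 ⟨by omega, by omega⟩)
      omega
  · rintro (h | h) <;> rw [h] <;> simp

lemma mem_antiExc_iff (hinj : Function.Injective f) (hper : ∀ x, f (x + N) = f x + N)
    {a j m : ℤ} (hj : j ∈ Icc 1 (N : ℤ)) (hjm : fbar N f j = m) :
    m ∈ antiExc N f a ↔ m ∈ Icc 1 (N : ℤ) ∧ (f m = m + N ∨ (m - a) % N < (j - a) % N) := by
  simp only [antiExc, mem_filter]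
  refine and_congr_right fun _ => or_congr_right ⟨?_, fun h => ⟨j, hj, hjm, h⟩⟩
  rintro ⟨k, hk, hkm, hlt⟩
  rwa [fbar_injOn hinj hper hk hj (hkm.trans hjm.symm)] at hlt

lemma fbar_reflect (hsym : ∀ a, f (N + 1 - a) = 2 * N + 1 - f a) {j m : ℤ}
    (hm : m ∈ Icc 1 (N : ℤ)) (hjm : fbar N f j = m) : fbar N f (N + 1 - j) = N + 1 - m := by
  have hm' : N + 1 - m ∈ Icc 1 (N : ℤ) := by rw [mem_Icc] at hm ⊢; omega
  rw [fbar_eq_iff_modEq hm] at hjm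
  rw [fbar_eq_iff_modEq hm', hsym]
  calc 2 * (N : ℤ) + 1 - f j ≡ 2 * N + 1 - m [ZMOD N] := hjm.sub_left _
    _ = N + 1 - m + N * 1 := by ring
    _ ≡ N + 1 - m [ZMOD N] := Int.modEq_add_fac_self

lemma mem_antiExc_reflect_iff (hinj : Function.Injective f) (hsurj : Function.Surjective f)
    (hper : ∀ x, f (x + N) = f x + N) (hbd : ∀ x, x ≤ f x ∧ f x ≤ x + N)
    (hsym : ∀ a, f (N + 1 - a) = 2 * N + 1 - f a) {m : ℤ} (hm : m ∈ Icc 1 (N : ℤ)) (i : ℤ) :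
    m ∈ antiExc N f (N + 2 - i) ↔ N + 1 - m ∉ antiExc N f i := by
  obtain ⟨j, hj, hjm⟩ := exists_fbar_eq hsurj hper hm
  have hN : 0 < (N : ℤ) := by rw [mem_Icc] at hm; omega
  have hm' : N + 1 - m ∈ Icc 1 (N : ℤ) := by rw [mem_Icc] at hm ⊢; omega
  have hj' : N + 1 - j ∈ Icc 1 (N : ℤ) := by rw [mem_Icc] at hj ⊢; omega
  rw [mem_antiExc_iff hinj hper hj hjm, mem_antiExc_iff hinj hper hj' (fbar_reflect hsym hm hjm),
    reflect_emod_lt_iff hN, hsym]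
  simp only [hm, hm', true_and, not_or, not_lt]
  by_cases hjm_eq : j = m
  · subst hjm_eq
    have := (fbar_self_iff hbd hm).1 hjm
    omega
  · have hfix : ¬ (f m = m ∨ f m = m + N) := fun h =>
      hjm_eq (fbar_injOn hinj hper hj hm (hjm.trans ((fbar_self_iff hbd hm).2 h).symm))
    have hres : (m - (N + 2 - i)) % N ≠ (j - (N + 2 - i)) % N := fun h =>
      hjm_eq (eq_of_modEq_of_mem_Icc (Int.ModEq.add_right_cancel' _ h) hm hj).symm
    omega

end AffinePermutation

lemma mem_Rset {n : ℕ} {I : Finset ℤ} {m : ℤ} :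
    m ∈ Rset n I ↔ m ∈ Icc 1 (2 * (n : ℤ)) ∧ 2 * (n : ℤ) + 1 - m ∉ I := by
  simp only [Rset, mem_sdiff, mem_image]
  refine and_congr_right fun _ => not_congr ⟨?_, fun h => ⟨_, h, by ring⟩⟩
  rintro ⟨x, hx, rfl⟩
  simpa using hx

/-- For a symmetric bounded affine permutation `f` of type `(n,2n)`,
`R(I_i(f)) = I_{i'+1}(f)` for every `i ∈ [2n]`, where `i' = 2n+1-i`
(so `i'+1 = 2n+2-i`, indices modulo `2n`). -/
theorem symmetric_BAP_antiExceedance_necklace (n : ℕ) (f : ℤ → ℤ)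
    (hf : IsBAP (2 * n) n f) (hsym : IsSymmBAP n f) :
    ∀ i ∈ Finset.Icc (1 : ℤ) (2 * (n : ℤ)),
      Rset n (antiExc (2 * n) f i) = antiExc (2 * n) f (2 * (n : ℤ) + 2 - i) := by
  intro i _
  obtain ⟨⟨hinj, hsurj⟩, hper, hbd, -⟩ := hf
  have hsym' : ∀ a, f (((2 * n : ℕ) : ℤ) + 1 - a) = 2 * ((2 * n : ℕ) : ℤ) + 1 - f a := by
    push_cast; intro a; rw [hsym a]; ring
  ext m
  rw [mem_Rset]
  by_cases hm : m ∈ Icc 1 (2 * (n : ℤ))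
  · have key := mem_antiExc_reflect_iff hinj hsurj hper hbd hsym' (by push_cast; exact hm) i
    push_cast at key
    exact ⟨fun h => key.2 h.2, fun h => ⟨hm, key.1 h⟩⟩
  · exact ⟨fun h => absurd h.1 hm, fun h => absurd (mem_filter.1 h).1 (by push_cast; exact hm)⟩
end

section
/- Let f be a symmetric bounded affine permutation of type (n,2n), and let (J_1,…,J_{2n}) be a dual Grassmann necklace of type (n,2n) whose associated bounded affine permutation is f. Then R(J_i) = J_{i'+1} for all i ∈ [2n], where i' = 2n+1−i and indices are taken modulo 2n. -/
/-!
Membership in a dual Grassmann necklace is read off from its bounded affine permutation: for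
`x ∈ [1, N]`, `x ∈ J i` iff `i` lies modulo `N` in the cyclic interval `(x, f x]`, i.e.
`(i - x - 1) % N < f x - x`. This holds at `i = x + 1` and propagates downwards, because passing
from `J (i + 1)` to `J i` removes `i` and inserts `f̄⁻¹(i)`. The symmetry `f(2n+1-y) = 4n+1-f(y)`
turns the condition for `2n+1-y` at `i` into the negation of the condition for `y` at `2n+2-i`.
-/

open Function

namespace Int

theorem eq_of_modEq_of_mem_Icc {N a b : ℤ} (h : a ≡ b [ZMOD N]) (ha : a ∈ Finset.Icc 1 N)
    (hb : b ∈ Finset.Icc 1 N) : a = b := by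
  rw [Finset.mem_Icc] at ha hb
  have h' : a - 1 ≡ b - 1 [ZMOD N] := h.sub_right 1
  rwa [Int.ModEq, Int.emod_eq_of_lt (by omega) (by omega), Int.emod_eq_of_lt (by omega) (by omega),
    sub_left_inj] at h'

theorem sub_one_emod_lt_iff {N a d : ℤ} (hN : 0 < N) (ha : a % N ≠ 0) (had : a % N ≠ d) :
    (a - 1) % N < d ↔ a % N < d := by
  have h0 := Int.emod_nonneg a hN.ne'
  have hlt := Int.emod_lt_of_pos a hN
  have hsub : (a - 1) % N = a % N - 1 := by
    rw [Int.sub_emod, Int.emod_eq_of_lt (b := N) (a := 1) (by omega) (by omega)]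
    exact Int.emod_eq_of_lt (by omega) (by omega)
  omega

theorem emod_add_neg_one_sub_emod {N : ℤ} (hN : 0 < N) (a : ℤ) :
    a % N + (-1 - a) % N = N - 1 := by
  have h0 := Int.emod_nonneg a hN.ne'
  have hlt := Int.emod_lt_of_pos a hN
  have hdiv := Int.emod_def a N
  rw [show -1 - a = (N - 1 - a % N) + N * (-(a / N) - 1) by linear_combination hdiv,
    Int.add_mul_emod_self_left, Int.emod_eq_of_lt (a := N - 1 - a % N) (by omega) (by omega)]
  ring

theorem forall_of_periodic_of_step_down {P : ℤ → Prop} {N : ℤ} (hP : Periodic P N) (hN : 0 < N)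
    {a : ℤ} (ha : P a) (hstep : ∀ i ∈ Finset.Icc 1 N, P (i + 1) → P i) (i : ℤ) : P i := by
  have hQ : Periodic (fun i => P (i + 1) → P i) N := fun i => by
    simp only [add_right_comm i N 1, hP (i + 1), hP i]
  have hstep' (i : ℤ) : P (i + 1) → P i := by
    obtain ⟨y, hy, hiy⟩ := hQ.exists_mem_Ico hN i 1
    rw [hiy]
    exact hstep y (by simp only [Set.mem_Ico, Finset.mem_Icc] at hy ⊢; omega)
  have hle : ∀ j ≤ a, P j := Int.leInductionDown (motive := fun j _ => P j) ha
    fun j _ hj => hstep' _ (by rwa [sub_add_cancel])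
  obtain ⟨y, hy, hiy⟩ := hP.exists_mem_Ico hN i (a - N)
  rw [hiy]
  exact hle y (by simp only [Set.mem_Ico] at hy; omega)

end Int

theorem fbar_eq_iff_modEq_s3 {N : ℕ} {f : ℤ → ℤ} {i j : ℤ} (hi : i ∈ Finset.Icc 1 (N : ℤ)) :
    fbar N f j = i ↔ f j ≡ i [ZMOD N] := by
  rw [Finset.mem_Icc] at hi
  rw [fbar, ← eq_sub_iff_add_eq, ← Int.emod_eq_of_lt (a := i - 1) (b := N) (by omega) (by omega)]
  exact ⟨fun h => by simpa using Int.ModEq.add_right 1 h, fun h => h.sub_right 1⟩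

namespace IsBAP

variable {N k : ℕ} {f : ℤ → ℤ}

theorem periodic_sub_self (hf : IsBAP N k f) : Periodic (fun i => f i - i) N := fun i => by
  show f (i + N) - (i + N) = f i - i
  rw [hf.2.1 i]
  ring

theorem add_int_mul (hf : IsBAP N k f) (m i : ℤ) : f (i + m * N) = f i + m * N := by
  have : f (i + m * N) - (i + m * N) = f i - i := hf.periodic_sub_self.int_mul m i
  linarith

theorem eq_of_modEq (hf : IsBAP N k f) {a b : ℤ} (ha : a ∈ Finset.Icc 1 (N : ℤ))
    (hb : b ∈ Finset.Icc 1 (N : ℤ)) (h : f a ≡ f b [ZMOD N]) : a = b := by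
  obtain ⟨m, hm⟩ := Int.modEq_iff_dvd.mp h
  have hfb : f (a + m * N) = f b := by rw [hf.add_int_mul]; linarith
  refine Int.eq_of_modEq_of_mem_Icc (Int.modEq_iff_dvd.mpr ⟨m, ?_⟩) ha hb
  rw [← hf.1.1 hfb]
  ring

end IsBAP

theorem IsBAP.sub_sub_one_emod_lt_iff {N k : ℕ} {f : ℤ → ℤ} (hf : IsBAP N k f) {x i : ℤ}
    (hx : x ∈ Finset.Icc 1 (N : ℤ)) (hi : i ∈ Finset.Icc 1 (N : ℤ)) (hxi : x ≠ i)
    (hfx : ¬ f x ≡ i [ZMOD N]) :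
    (i - x - 1) % N < f x - x ↔ (i - x) % N < f x - x := by
  have hN : 0 < (N : ℤ) := by rw [Finset.mem_Icc] at hx; omega
  have hbound := hf.2.2.1 x
  refine Int.sub_one_emod_lt_iff hN (fun h => hxi ?_) (fun h => hfx ?_)
  · exact Int.eq_of_modEq_of_mem_Icc (Int.modEq_iff_dvd.mpr (Int.dvd_of_emod_eq_zero h)) hx hi
  · have hlt : f x - x < N := h ▸ Int.emod_lt_of_pos _ hN
    have : f x - x ≡ i - x [ZMOD N] := by
      rw [Int.ModEq, h, Int.emod_eq_of_lt (by omega) hlt]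
    simpa using this.add_right x

theorem IsDGN.subset_Icc {N k : ℕ} {J : ℤ → Finset ℤ} (hJ : IsDGN N k J) (hN : 0 < N) (i : ℤ) :
    J i ⊆ Finset.Icc 1 (N : ℤ) := by
  have hper : Periodic J N := hJ.1
  obtain ⟨y, hy, hiy⟩ := hper.exists_mem_Ico (by exact_mod_cast hN) i 1
  rw [hiy]
  exact (hJ.2 y (by simp only [Set.mem_Ico, Finset.mem_Icc] at hy ⊢; omega)).1

namespace DGNAssoc

variable {N k : ℕ} {f : ℤ → ℤ} {J : ℤ → Finset ℤ}

theorem eq_or_eq_add_of_eq (hassoc : DGNAssoc N J f) {i : ℤ} (hi : i ∈ Finset.Icc 1 (N : ℤ))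
    (h : J i = J (i + 1)) : f i = i ∨ f i = i + N := by
  by_cases hmem : i ∈ J (i + 1)
  · exact Or.inr ((hassoc i hi).2.1 h hmem)
  · exact Or.inl ((hassoc i hi).1 h hmem)

theorem exists_modEq_of_ne (hassoc : DGNAssoc N J f) {i : ℤ} (hi : i ∈ Finset.Icc 1 (N : ℤ))
    (h : J i ≠ J (i + 1)) : ∃ j ∈ Finset.Icc 1 (N : ℤ),
      j ≠ i ∧ f j ≡ i [ZMOD N] ∧ J i = insert j ((J (i + 1)).erase i) := by
  obtain ⟨j, hj, hji, hfj, hJi⟩ := (hassoc i hi).2.2 h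
  exact ⟨j, hj, hji, (fbar_eq_iff_modEq_s3 hi).1 hfj, hJi⟩

theorem mem_succ_self_iff (hassoc : DGNAssoc N J f) (hf : IsBAP N k f) (hJ : IsDGN N k J)
    {x : ℤ} (hx : x ∈ Finset.Icc 1 (N : ℤ)) : x ∈ J (x + 1) ↔ x < f x := by
  have hN : 0 < (N : ℤ) := by rw [Finset.mem_Icc] at hx; omega
  have hbound := hf.2.2.1 x
  constructor
  · intro hmem
    by_contra hle
    have hfx : f x = x := by omega
    have hJx : J x = J (x + 1) := by
      by_contra hne
      obtain ⟨j, hj, hjx, hfj, -⟩ := hassoc.exists_modEq_of_ne hx hne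
      exact hjx (hf.eq_of_modEq hj hx (by rwa [hfx]))
    have := (hassoc x hx).2.1 hJx hmem
    omega
  · intro hlt
    by_contra hmem
    have := (hassoc x hx).1 ((hJ.2 x hx).2.2.2 hmem) hmem
    omega

theorem mem_iff_step (hassoc : DGNAssoc N J f) (hf : IsBAP N k f) {x i : ℤ}
    (hx : x ∈ Finset.Icc 1 (N : ℤ)) (hi : i ∈ Finset.Icc 1 (N : ℤ))
    (h : x ∈ J (i + 1) ↔ (i - x) % N < f x - x) : x ∈ J i ↔ (i - x - 1) % N < f x - x := by
  have hN : 0 < (N : ℤ) := by rw [Finset.mem_Icc] at hx; omega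
  have hbound := hf.2.2.1 x
  have hneg : (-1 : ℤ) % N = N - 1 := by simpa using Int.emod_add_neg_one_sub_emod hN 0
  by_cases hJi : J i = J (i + 1)
  · rw [hJi, h]
    by_cases hxi : x = i
    · subst hxi
      rw [sub_self, Int.zero_emod, zero_sub, hneg]
      rcases hassoc.eq_or_eq_add_of_eq hi hJi with hfx | hfx <;> omega
    · have hfi : f i ≡ i [ZMOD N] := by
        rcases hassoc.eq_or_eq_add_of_eq hi hJi with hfi | hfi <;> rw [hfi]
        exact Int.add_modEq_right
      exact (hf.sub_sub_one_emod_lt_iff hx hi hxi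
        fun hfx => hxi (hf.eq_of_modEq hx hi (hfx.trans hfi.symm))).symm
  · obtain ⟨j, hj, hji, hfj, hJi'⟩ := hassoc.exists_modEq_of_ne hi hJi
    rw [hJi', Finset.mem_insert, Finset.mem_erase]
    by_cases hxj : x = j
    · subst hxj
      have hfx : f x ≠ x := fun hfx => hji (Int.eq_of_modEq_of_mem_Icc (hfx ▸ hfj) hx hi)
      have hmod : (i - x - 1) % N = f x - x - 1 := by
        rw [((hfj.symm.sub_right x).sub_right 1 : _ % _ = _), Int.emod_eq_of_lt (by omega) (by omega)]
      simp only [true_or, true_iff]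
      omega
    · by_cases hxi : x = i
      · subst hxi
        have hfx : f x ≠ x + N := fun hfx =>
          hxj (hf.eq_of_modEq hx hj (hfx ▸ Int.add_modEq_right.trans hfj.symm))
        simp only [hxj, ne_eq, not_true_eq_false, false_and, or_self, false_iff, sub_self,
          zero_sub, hneg]
        omega
      · simp only [hxj, hxi, ne_eq, not_false_eq_true, true_and, false_or, h]
        exact (hf.sub_sub_one_emod_lt_iff hx hi hxi
          fun hfx => hxj (hf.eq_of_modEq hx hj (hfx.trans hfj.symm))).symm

theorem mem_iff (hassoc : DGNAssoc N J f) (hf : IsBAP N k f) (hJ : IsDGN N k J) {x : ℤ}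
    (hx : x ∈ Finset.Icc 1 (N : ℤ)) (i : ℤ) : x ∈ J i ↔ (i - x - 1) % N < f x - x := by
  have hN : 0 < (N : ℤ) := by rw [Finset.mem_Icc] at hx; omega
  refine Int.forall_of_periodic_of_step_down
    (P := fun i => x ∈ J i ↔ (i - x - 1) % N < f x - x) (fun i => ?_) hN (a := x + 1) ?_
    (fun i hi h => hassoc.mem_iff_step hf hx hi ?_) i
  · simp only [hJ.1 i, show i + N - x - 1 = i - x - 1 + N by ring, ← Int.emod_eq_add_self_emod]
  · simpa using hassoc.mem_succ_self_iff hf hJ hx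
  · rwa [sub_right_comm, add_sub_cancel_right] at h

end DGNAssoc

theorem IsSymmBAP.mem_iff_not_mem {n k : ℕ} {f : ℤ → ℤ} {J : ℤ → Finset ℤ}
    (hsym : IsSymmBAP n f) (hf : IsBAP (2 * n) k f) (hJ : IsDGN (2 * n) k J)
    (hassoc : DGNAssoc (2 * n) J f) {y : ℤ} (hy : y ∈ Finset.Icc 1 (2 * (n : ℤ))) (i : ℤ) :
    y ∈ J (2 * n + 2 - i) ↔ 2 * n + 1 - y ∉ J i := by
  have hcast : ((2 * n : ℕ) : ℤ) = 2 * n := by push_cast; rfl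
  rw [Finset.mem_Icc] at hy
  have hN : 0 < 2 * (n : ℤ) := by omega
  rw [hassoc.mem_iff hf hJ (by rw [hcast, Finset.mem_Icc]; omega),
    hassoc.mem_iff hf hJ (by rw [hcast, Finset.mem_Icc]; omega), hcast, hsym y,
    show 2 * n + 2 - i - y - 1 = -1 - (i + y - 2) + 2 * n * 1 by ring,
    show i - (2 * n + 1 - y) - 1 = i + y - 2 + 2 * n * (-1) by ring,
    Int.add_mul_emod_self_left, Int.add_mul_emod_self_left]
  have hsum := Int.emod_add_neg_one_sub_emod hN (i + y - 2)
  generalize (i + y - 2) % (2 * n) = u at hsum ⊢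
  generalize (-1 - (i + y - 2)) % (2 * n) = v at hsum ⊢
  omega

/-- If `f` is a symmetric bounded affine permutation of type `(n,2n)` and
`(J_1,…,J_{2n})` is a dual Grassmann necklace whose associated bounded affine permutation
is `f`, then `R(J_i) = J_{i'+1}` for all `i ∈ [2n]` (with `i' = 2n+1-i`, indices mod `2n`). -/
theorem symmetric_BAP_implies_dual_necklace_symmetry (n : ℕ) (f : ℤ → ℤ)
    (hf : IsBAP (2 * n) n f) (hsym : IsSymmBAP n f)
    (J : ℤ → Finset ℤ) (hJ : IsDGN (2 * n) n J) (hassoc : DGNAssoc (2 * n) J f) :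
    ∀ i ∈ Finset.Icc (1 : ℤ) (2 * (n : ℤ)),
      Rset n (J i) = J (2 * (n : ℤ) + 2 - i) := by
  intro i hi
  have hN : 0 < 2 * n := by rw [Finset.mem_Icc] at hi; omega
  ext y
  simp only [Rset, Finset.mem_sdiff, Finset.mem_image, not_exists, not_and]
  constructor
  · rintro ⟨hy, hyJ⟩
    exact (hsym.mem_iff_not_mem hf hJ hassoc hy i).2 fun h => hyJ _ h (by ring)
  · intro hy
    have hy' : y ∈ Finset.Icc 1 (2 * (n : ℤ)) := by exact_mod_cast hJ.subset_Icc hN _ hy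
    refine ⟨hy', fun z hz hzy => (hsym.mem_iff_not_mem hf hJ hassoc hy' i).1 hy ?_⟩
    rwa [← hzy, sub_sub_cancel]
end

section
/- Let M be a real k×n matrix of rank k. Then its span-permutation f_M is a bounded affine permutation of type (k,n): f_M is a bijection of ℤ, f_M(i+n) = f_M(i)+n for all i, i ≤ f_M(i) ≤ i+n for all i, and Σ_{i=1}^{n} (f_M(i) − i) = kn. -/
/-!
`f i ≤ r` exactly when `v i ∈ span (v (i+1), …, v r)`. Growing a window `(a, m]` to the left
therefore raises the rank of its span precisely at the columns `i` with `f i > m`, so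
`rank (a, m] = #{i ∈ (a, m] | m < f i}`. Every window of length `n` spans `ℝᵏ`, so it contains
exactly `k` such `i`; summing over `m ∈ [1, n]` and exchanging the order of summation (using
`f (i + n) = f i + n`) gives `∑ (f i - i) = k n`. Comparing the windows `(a, m - 1]` and `(a, m]`
shows that at most one `i ∈ (a, m]` has `f i = m`, and exactly one once the windows span `ℝᵏ`.
-/

open Module Submodule Finset

open scoped Classical in
theorem finrank_span_insert {K V : Type*} [DivisionRing K] [AddCommGroup V] [Module K V]
    [FiniteDimensional K V] (x : V) (s : Set V) :
    finrank K (span K (insert x s)) = finrank K (span K s) + if x ∈ span K s then 0 else 1 := by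
  split_ifs with hx
  · rw [span_insert_eq_span hx, add_zero]
  · have hx0 : x ≠ 0 := fun h => hx (h ▸ zero_mem _)
    have hdisj : Disjoint (span K s) (K ∙ x) := (disjoint_span_singleton' hx0).2 hx
    have h := finrank_sup_add_finrank_inf_eq (span K s) (K ∙ x)
    rw [hdisj.eq_bot, finrank_bot, finrank_span_singleton hx0, add_zero] at h
    rw [span_insert, sup_comm, h]

theorem Function.Periodic.sum_Icc_add {M : Type*} [AddCancelCommMonoid M] {g : ℤ → M} {n : ℕ}
    (hg : Function.Periodic g n) (c : ℤ) :
    ∑ i ∈ Icc 1 (n : ℤ), g (i + c) = ∑ i ∈ Icc 1 (n : ℤ), g i := by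
  have hstep : ∀ a : ℤ, ∑ t ∈ range n, g (a + 1 + t) = ∑ t ∈ range n, g (a + t) := by
    intro a
    have h := (sum_range_succ' (fun t : ℕ => g (a + t)) n).symm.trans
      (sum_range_succ (fun t : ℕ => g (a + t)) n)
    simp only [Nat.cast_add, Nat.cast_one, Nat.cast_zero, add_zero, hg a] at h
    simpa only [add_assoc, add_comm (1 : ℤ)] using add_right_cancel h
  have hshift : ∀ a : ℤ, ∑ t ∈ range n, g (a + t) = ∑ t ∈ range n, g t := by
    intro a
    induction a using Int.induction_on with
    | zero => simp only [zero_add]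
    | succ a ih => rw [hstep, ih]
    | pred a ih => rw [← ih, ← hstep, sub_add_cancel]
  rw [Int.Icc_eq_finset_map, sum_map, sum_map]
  simp only [add_sub_cancel_right, Int.toNat_natCast, Function.Embedding.trans_apply,
    Nat.castEmbedding_apply, addLeftEmbedding_apply, add_right_comm (1 : ℤ) _ c, hshift]

theorem sum_range_ite_add_lt (n : ℕ) {a b : ℤ} (hab : a ≤ b) (hb : b ≤ a + n) :
    ∑ j ∈ range n, (if a + j < b then 1 else 0 : ℤ) = b - a := by
  have hfilter : {j ∈ range n | a + (j : ℕ) < b} = range (b - a).toNat := by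
    ext j
    simp only [mem_filter, mem_range]
    omega
  rw [sum_boole, hfilter, card_range]
  omega

theorem span_image_Ioc_eq_top {k n : ℕ} {v : ℤ → Fin k → ℝ} (hper : Function.Periodic v n)
    (hrank : span ℝ (v '' Set.Icc 1 (n : ℤ)) = ⊤) {a m : ℤ} (h : a + n ≤ m) :
    span ℝ (v '' Set.Ioc a m) = ⊤ := by
  refine top_unique (hrank ▸ span_mono ?_)
  rcases Nat.eq_zero_or_pos n with rfl | hn
  · simp
  calc v '' Set.Icc 1 (n : ℤ) ⊆ Set.range v := Set.image_subset_range _ _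
    _ = v '' Set.Ioc a (a + n) := (hper.image_Ioc (by exact_mod_cast hn) a).symm
    _ ⊆ v '' Set.Ioc a m := Set.image_mono (Set.Ioc_subset_Ioc_right h)

namespace IsSpanPerm

variable {k : ℕ} {v : ℤ → Fin k → ℝ} {f : ℤ → ℤ}

theorem mem_span_iff (hf : IsSpanPerm v f) {i r : ℤ} (hir : i ≤ r) :
    v i ∈ span ℝ (v '' Set.Ioc i r) ↔ f i ≤ r :=
  ⟨(hf i).2.2 r hir,
    fun h => span_mono (Set.image_mono (Set.Ioc_subset_Ioc_right h)) (hf i).2.1⟩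

theorem unique {g : ℤ → ℤ} (hf : IsSpanPerm v f) (hg : IsSpanPerm v g) : f = g :=
  funext fun i =>
    le_antisymm ((hf i).2.2 _ (hg i).1 (hg i).2.1) ((hg i).2.2 _ (hf i).1 (hf i).2.1)

theorem comp_add_right (hf : IsSpanPerm v f) (c : ℤ) :
    IsSpanPerm (fun j => v (j + c)) (fun i => f (i + c) - c) := by
  have himage : ∀ a b : ℤ,
      (fun j => v (j + c)) '' Set.Ioc a b = v '' Set.Ioc (a + c) (b + c) := by
    intro a b
    rw [← Set.image_add_const_Ioc, Set.image_image]
  intro i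
  refine ⟨by linarith [(hf (i + c)).1], ?_, fun r hir hr => ?_⟩
  · rw [himage, sub_add_cancel]
    exact (hf (i + c)).2.1
  · rw [himage] at hr
    linarith [(hf (i + c)).2.2 (r + c) (by linarith) hr]

theorem add_period (hf : IsSpanPerm v f) {n : ℤ} (hper : Function.Periodic v n) (i : ℤ) :
    f (i + n) = f i + n := by
  have hshift := hf.comp_add_right n
  rw [show (fun j => v (j + n)) = v from funext hper] at hshift
  have := congrFun (hf.unique hshift) i
  omega

theorem finrank_span_Ioc (hf : IsSpanPerm v f) (m : ℤ) (d : ℕ) :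
    finrank ℝ (span ℝ (v '' Set.Ioc (m - d) m)) =
      ∑ j ∈ range d, if m < f (m - j) then 1 else 0 := by
  induction d with
  | zero => simp
  | succ d ih =>
    have hIoc : Set.Ioc (m - (d + 1 : ℕ)) m = insert (m - d) (Set.Ioc (m - d) m) := by
      ext x
      simp only [Set.mem_Ioc, Set.mem_insert_iff]
      push_cast
      omega
    rw [hIoc, Set.image_insert_eq, finrank_span_insert, ih, sum_range_succ,
      hf.mem_span_iff (i := m - d) (r := m) (by omega)]
    congr 1
    split_ifs <;> omega

theorem card_fiber_add_finrank (hf : IsSpanPerm v f) (m : ℤ) (e : ℕ) :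
    #{j ∈ range (e + 1) | f (m - (j : ℕ)) = m} +
        finrank ℝ (span ℝ (v '' Set.Ioc (m - (e + 1 : ℕ)) m)) =
      finrank ℝ (span ℝ (v '' Set.Ioc (m - 1 - e) (m - 1))) + 1 := by
  -- termwise `[f x = m] + [m < f x] = [m ≤ f x]`; the `j = 0` term is `1` because `m ≤ f m`
  rw [hf.finrank_span_Ioc, hf.finrank_span_Ioc, card_filter, ← sum_add_distrib, sum_range_succ']
  have hm := (hf m).1
  congr 1
  · refine sum_congr rfl fun j _ => ?_
    rw [Nat.cast_add_one, show m - ((j : ℤ) + 1) = m - 1 - j by ring]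
    split_ifs <;> omega
  · simp only [Nat.cast_zero, sub_zero]
    split_ifs <;> omega

theorem injective (hf : IsSpanPerm v f) : Function.Injective f := by
  intro a b hab
  set m := f a
  set e := (m - min a b).toNat
  have ha := (hf a).1
  have hb := (hf b).1
  have hrank_le : finrank ℝ (span ℝ (v '' Set.Ioc (m - 1 - e) (m - 1))) ≤
      finrank ℝ (span ℝ (v '' Set.Ioc (m - (e + 1 : ℕ)) m)) :=
    finrank_mono (span_mono (Set.image_mono (Set.Ioc_subset_Ioc (by omega) (by omega))))
  have hcard : #{j ∈ range (e + 1) | f (m - (j : ℕ)) = m} ≤ 1 := by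
    have := hf.card_fiber_add_finrank m e
    omega
  have hmem : ∀ x, f x = m → x ≤ m → min a b ≤ x →
      (m - x).toNat ∈ {j ∈ range (e + 1) | f (m - (j : ℕ)) = m} := by
    intro x hx hxm hmin
    simp only [mem_filter, mem_range]
    refine ⟨by omega, ?_⟩
    rwa [Int.toNat_of_nonneg (by omega), sub_sub_cancel]
  have := card_le_one.mp hcard _ (hmem a rfl ha (min_le_left a b)) _
    (hmem b hab.symm (hab ▸ hb) (min_le_right a b))
  omega

theorem surjective (hf : IsSpanPerm v f) {n : ℕ} (hper : Function.Periodic v n)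
    (hrank : span ℝ (v '' Set.Icc 1 (n : ℤ)) = ⊤) :
    Function.Surjective f := by
  intro m
  have hfiber := hf.card_fiber_add_finrank m n
  rw [span_image_Ioc_eq_top hper hrank (by push_cast; omega),
    span_image_Ioc_eq_top hper hrank (by omega)] at hfiber
  obtain ⟨j, hj⟩ := card_pos.mp (by omega : 0 < #{j ∈ range (n + 1) | f (m - (j : ℕ)) = m})
  exact ⟨m - j, (mem_filter.mp hj).2⟩

theorem le_add_period (hf : IsSpanPerm v f) {n : ℕ} (hper : Function.Periodic v n)
    (hrank : span ℝ (v '' Set.Icc 1 (n : ℤ)) = ⊤) (i : ℤ) :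
    f i ≤ i + n :=
  (hf.mem_span_iff (by omega)).1 (by rw [span_image_Ioc_eq_top hper hrank le_rfl]; trivial)

theorem sum_Icc_sub_eq (hf : IsSpanPerm v f) {n : ℕ} (hper : Function.Periodic v n)
    (hrank : span ℝ (v '' Set.Icc 1 (n : ℤ)) = ⊤) :
    ∑ i ∈ Icc 1 (n : ℤ), (f i - i) = k * n := by
  have hwindow : ∀ m, ∑ j ∈ range n, (if m < f (m - j) then 1 else 0 : ℤ) = k := by
    intro m
    have h := hf.finrank_span_Ioc m n
    rw [span_image_Ioc_eq_top (a := m - n) hper hrank (by omega), finrank_top,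
      finrank_fin_fun] at h
    exact_mod_cast h.symm
  have hperiodic : ∀ j : ℤ,
      Function.Periodic (fun m => if m < f (m - j) then (1 : ℤ) else 0) n := by
    intro j m
    dsimp only
    rw [show m + n - j = m - j + n by ring, hf.add_period hper]
    simp only [add_lt_add_iff_right]
  calc ∑ i ∈ Icc 1 (n : ℤ), (f i - i)
      = ∑ i ∈ Icc 1 (n : ℤ), ∑ j ∈ range n, (if i + j < f i then 1 else 0 : ℤ) :=
        sum_congr rfl fun i _ =>
          (sum_range_ite_add_lt n (hf i).1 (hf.le_add_period hper hrank i)).symm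
    _ = ∑ j ∈ range n, ∑ m ∈ Icc 1 (n : ℤ), (if m < f (m - j) then 1 else 0 : ℤ) := by
        rw [sum_comm]
        refine sum_congr rfl fun j _ => ?_
        simpa only [add_sub_cancel_right] using (hperiodic j).sum_Icc_add j
    _ = ∑ m ∈ Icc 1 (n : ℤ), (k : ℤ) := by
        rw [sum_comm]
        exact sum_congr rfl fun m _ => hwindow m
    _ = k * n := by simp [mul_comm]

end IsSpanPerm

/-- The span-permutation of a real `k×n` matrix of rank `k` is a bounded
affine permutation of type `(k,n)`. -/
theorem spanPerm_isBAP (n k : ℕ) (v : ℤ → Fin k → ℝ)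
    (hper : ∀ j : ℤ, v (j + (n : ℤ)) = v j)
    (hrank : Submodule.span ℝ (v '' Set.Icc (1 : ℤ) (n : ℤ)) = ⊤)
    (f : ℤ → ℤ) (hf : IsSpanPerm v f) :
    IsBAP n k f :=
  ⟨⟨hf.injective, hf.surjective hper hrank⟩, hf.add_period hper,
    fun i => ⟨(hf i).1, hf.le_add_period hper hrank i⟩, hf.sum_Icc_sub_eq hper hrank⟩
end

section
/- Let f be a bounded affine permutation of type (k,n) with no fixed points, i.e., f(i) ≠ i and f(i) ≠ i+n for all i ∈ ℤ. Then there exists i ∈ [n] such that f has a bridge at (i,i+1), i.e., i < f(i) < f(i+1) < i+n+1. -/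
/-!
Without fixed points, `i < f i` and `f (i + 1) < i + n + 1` always hold, so if `f` had no bridge
at `(i, i + 1)`, injectivity would force `f (i + 1) < f i`. Having no bridge anywhere in `[n]`
would make `f` strictly decrease from `1` to `n + 1`, contradicting `f (n + 1) = f 1 + n`.
-/

lemma Int.apply_add_sub_le_of_forall_apply_succ_lt {g : ℤ → ℤ} {a b : ℤ} (hab : a ≤ b)
    (hdesc : ∀ j, a ≤ j → j < b → g (j + 1) < g j) : g b + (b - a) ≤ g a := by
  induction b, hab using Int.leInduction with
  | base => simp
  | succ b hab ih =>
    have hstep := hdesc b hab (lt_add_one b)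
    have hprev := ih fun j hj hjb => hdesc j hj (hjb.trans (lt_add_one b))
    omega

lemma apply_succ_lt_of_not_bridge {n : ℕ} {f : ℤ → ℤ} (hinj : Function.Injective f) {i : ℤ}
    (hi : i < f i) (hsucc : f (i + 1) < i + n + 1)
    (hnot : ¬(i < f i ∧ f i < f (i + 1) ∧ f (i + 1) < i + n + 1)) : f (i + 1) < f i := by
  have hne : f (i + 1) ≠ f i := fun h => by simpa using hinj h
  omega

/-- A bounded affine permutation of type `(k,n)` with no fixed points
(`f(i) ≠ i` and `f(i) ≠ i+n` for all `i`) has a bridge at `(i,i+1)` for some `i ∈ [n]`. -/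
theorem BAP_no_fixed_points_has_bridge (n k : ℕ) (f : ℤ → ℤ) (hf : IsBAP n k f)
    (hnofix : ∀ i : ℤ, f i ≠ i ∧ f i ≠ i + (n : ℤ)) :
    ∃ i ∈ Finset.Icc (1 : ℤ) (n : ℤ),
      i < f i ∧ f i < f (i + 1) ∧ f (i + 1) < i + (n : ℤ) + 1 := by
  obtain ⟨hbij, hper, hbd, -⟩ := hf
  have hlt : ∀ i, i < f i := fun i => lt_of_le_of_ne (hbd i).1 (hnofix i).1.symm
  have hlt_succ : ∀ i, f (i + 1) < i + n + 1 := fun i => by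
    have := hbd (i + 1); have := (hnofix (i + 1)).2; omega
  have hn : 0 < n := by
    have := hlt 0; have := hbd 0; omega
  by_contra! hno
  have hdesc : ∀ j : ℤ, 1 ≤ j → j < 1 + n → f (j + 1) < f j := fun j hj hjn =>
    apply_succ_lt_of_not_bridge hbij.1 (hlt j) (hlt_succ j) fun hbr =>
      (hno j (Finset.mem_Icc.2 ⟨hj, by omega⟩) hbr.1 hbr.2.1).not_gt hbr.2.2
  have hdrop := Int.apply_add_sub_le_of_forall_apply_succ_lt (by omega) hdesc
  rw [add_comm, hper 1] at hdrop
  omega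
end

section
/- Let f be a bounded affine permutation of type (k,n) and for each a ∈ [n] let I_a(f) be its a-anti-exceedance set. Then |I_a(f)| = k for every a, and the sequence (I_1(f),…,I_n(f)) is a Grassmann necklace of type (k,n) whose associated bounded affine permutation is f: with indices mod n, if i ∉ I_i(f) then I_{i+1}(f) = I_i(f), and if i ∈ I_i(f) then I_{i+1}(f) = (I_i(f) ∖ {i}) ∪ {f̄(i)}. -/
/-! Moving the base point from `a` to `a + 1` moves `a` from the bottom to the top of the cyclic
order and leaves the relative order of everything else unchanged. So only two memberships can
change: `a` leaves (its preimage under `f̄` is no longer above it) and `f̄(a)` enters (its preimage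
`a` is now maximal), unless `f̄(a) = a`, in which case nothing changes. Hence every `I_a` has the
size of `I_1 = f̄({j ∈ [n] : f(j) > n})`, and this is `k` because `f̄` permutes `[n]`, so that
`∑ (f(j) - j) = n · #{j ∈ [n] : f(j) > n}`. -/

namespace Int

theorem emod_eq_ite_of_neg_le_of_lt {n z : ℤ} (h₁ : -n ≤ z) (h₂ : z < n) :
    z % n = if 0 ≤ z then z else z + n := by
  split_ifs with hz
  · exact emod_eq_of_lt hz h₂
  · rw [← add_mul_emod_self_left z n 1, mul_one]
    exact emod_eq_of_lt (by omega) (by omega)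

theorem emod_eq_ite_of_nonneg_of_lt_two_mul {n z : ℤ} (h₁ : 0 ≤ z) (h₂ : z < 2 * n) :
    z % n = if z < n then z else z - n := by
  split_ifs with hz
  · exact emod_eq_of_lt h₁ hz
  · rw [← sub_emod_right]
    exact emod_eq_of_lt (by omega) (by omega)

end Int

open Finset

section CyclicOrder

variable {n : ℕ} {a x y : ℤ}

theorem sub_emod_eq_ite (ha : a ∈ Icc (1 : ℤ) n) (hx : x ∈ Icc (1 : ℤ) n) :
    (x - a) % (n : ℤ) = if a ≤ x then x - a else x - a + n := by
  rw [mem_Icc] at ha hx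
  rw [Int.emod_eq_ite_of_neg_le_of_lt (by omega) (by omega)]
  split_ifs <;> omega

theorem sub_succ_emod_eq_ite (ha : a ∈ Icc (1 : ℤ) n) (hx : x ∈ Icc (1 : ℤ) n) :
    (x - (a + 1)) % (n : ℤ) = if a < x then x - a - 1 else x - a - 1 + n := by
  rw [mem_Icc] at ha hx
  rw [Int.emod_eq_ite_of_neg_le_of_lt (by omega) (by omega)]
  split_ifs <;> omega

theorem sub_succ_emod_lt_sub_succ_emod_iff (ha : a ∈ Icc (1 : ℤ) n) (hx : x ∈ Icc (1 : ℤ) n)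
    (hy : y ∈ Icc (1 : ℤ) n) (hxa : x ≠ a) (hya : y ≠ a) :
    (x - (a + 1)) % (n : ℤ) < (y - (a + 1)) % n ↔ (x - a) % (n : ℤ) < (y - a) % n := by
  rw [sub_succ_emod_eq_ite ha hx, sub_succ_emod_eq_ite ha hy, sub_emod_eq_ite ha hx,
    sub_emod_eq_ite ha hy]
  rw [mem_Icc] at ha hx hy
  split_ifs <;> omega

theorem sub_emod_pos (ha : a ∈ Icc (1 : ℤ) n) (hx : x ∈ Icc (1 : ℤ) n) (hxa : x ≠ a) :
    0 < (x - a) % (n : ℤ) := by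
  rw [sub_emod_eq_ite ha hx]
  rw [mem_Icc] at ha hx
  split_ifs <;> omega

theorem sub_succ_emod_lt (ha : a ∈ Icc (1 : ℤ) n) (hx : x ∈ Icc (1 : ℤ) n) (hxa : x ≠ a) :
    (x - (a + 1)) % (n : ℤ) < (a - (a + 1)) % n := by
  rw [sub_succ_emod_eq_ite ha hx, sub_succ_emod_eq_ite ha ha]
  rw [mem_Icc] at ha hx
  split_ifs <;> omega

end CyclicOrder

structure IsBoundedAffine (n : ℕ) (f : ℤ → ℤ) : Prop where
  injective : Function.Injective f
  map_add_period : ∀ i : ℤ, f (i + n) = f i + n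
  le_map : ∀ i : ℤ, i ≤ f i
  map_le : ∀ i : ℤ, f i ≤ i + n

theorem IsBAP.isBoundedAffine {n k : ℕ} {f : ℤ → ℤ} (hf : IsBAP n k f) :
    IsBoundedAffine n f :=
  ⟨hf.1.injective, hf.2.1, fun i => (hf.2.2.1 i).1, fun i => (hf.2.2.1 i).2⟩

namespace IsBoundedAffine

variable {n : ℕ} {f : ℤ → ℤ} {a i j : ℤ}

theorem fbar_eq_ite (hf : IsBoundedAffine n f) (hi : i ∈ Icc (1 : ℤ) n) :
    fbar n f i = if f i ≤ n then f i else f i - n := by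
  have := hf.le_map i
  have := hf.map_le i
  rw [mem_Icc] at hi
  rw [fbar, Int.emod_eq_ite_of_nonneg_of_lt_two_mul (by omega) (by omega)]
  split_ifs <;> omega

theorem fbar_mem_Icc (hf : IsBoundedAffine n f) (hi : i ∈ Icc (1 : ℤ) n) :
    fbar n f i ∈ Icc (1 : ℤ) n := by
  have := hf.le_map i
  have := hf.map_le i
  rw [hf.fbar_eq_ite hi]
  rw [mem_Icc] at hi ⊢
  split_ifs <;> omega

theorem fbar_injOn (hf : IsBoundedAffine n f) : Set.InjOn (fbar n f) (Icc (1 : ℤ) n) := by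
  intro i hi j hj hij
  rw [mem_coe] at hi hj
  rw [hf.fbar_eq_ite hi, hf.fbar_eq_ite hj] at hij
  have hi' := hf.map_add_period (i - n)
  have hj' := hf.map_add_period (j - n)
  rw [sub_add_cancel] at hi' hj'
  rw [mem_Icc] at hi hj
  split_ifs at hij
  · exact hf.injective hij
  · have := hf.injective (by omega : f i = f (j - n))
    omega
  · have := hf.injective (by omega : f (i - n) = f j)
    omega
  · exact hf.injective (by omega)

theorem image_fbar (hf : IsBoundedAffine n f) :
    (Icc (1 : ℤ) n).image (fbar n f) = Icc (1 : ℤ) n :=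
  eq_of_subset_of_card_le (image_subset_iff.mpr fun _ => hf.fbar_mem_Icc)
    (card_image_of_injOn hf.fbar_injOn).ge

theorem exists_fbar_eq (hf : IsBoundedAffine n f) (hi : i ∈ Icc (1 : ℤ) n) :
    ∃ j ∈ Icc (1 : ℤ) n, fbar n f j = i := by
  rw [← hf.image_fbar] at hi
  exact mem_image.mp hi

theorem fbar_eq_self_iff (hf : IsBoundedAffine n f) (hi : i ∈ Icc (1 : ℤ) n) :
    fbar n f i = i ↔ f i = i ∨ f i = i + n := by
  have := hf.le_map i
  rw [hf.fbar_eq_ite hi]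
  rw [mem_Icc] at hi
  split_ifs <;> omega

end IsBoundedAffine

section AntiExceedance

variable {n k : ℕ} {f : ℤ → ℤ} {a i : ℤ}

theorem mem_antiExc : i ∈ antiExc n f a ↔ i ∈ Icc (1 : ℤ) n ∧ (f i = i + n ∨
    ∃ j ∈ Icc (1 : ℤ) n, fbar n f j = i ∧ (i - a) % (n : ℤ) < (j - a) % n) :=
  mem_filter

theorem antiExc_subset : antiExc n f a ⊆ Icc (1 : ℤ) n := filter_subset _ _

theorem antiExc_periodic : Function.Periodic (antiExc n f) n := fun a => by
  simp only [antiExc, sub_add_eq_sub_sub, Int.sub_emod_right]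

theorem mem_antiExc_succ_iff (ha : a ∈ Icc (1 : ℤ) n) (hia : i ≠ a) (hai : fbar n f a ≠ i) :
    i ∈ antiExc n f (a + 1) ↔ i ∈ antiExc n f a := by
  simp only [mem_antiExc]
  refine and_congr_right fun hi => or_congr_right <| exists_congr fun j =>
    and_congr_right fun hj => and_congr_right fun hji => ?_
  exact sub_succ_emod_lt_sub_succ_emod_iff ha hi hj hia (by rintro rfl; exact hai hji)

namespace IsBoundedAffine

theorem mem_antiExc_iff_of_fbar_eq_self (hf : IsBoundedAffine n f) (hi : i ∈ Icc (1 : ℤ) n)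
    (h : fbar n f i = i) : i ∈ antiExc n f a ↔ f i = i + n := by
  rw [mem_antiExc, and_iff_right hi, or_iff_left]
  rintro ⟨j, hj, hji, hlt⟩
  obtain rfl := hf.fbar_injOn hj hi (hji.trans h.symm)
  exact lt_irrefl _ hlt

theorem antiExc_succ_of_fbar_eq_self (hf : IsBoundedAffine n f) (ha : a ∈ Icc (1 : ℤ) n)
    (h : fbar n f a = a) : antiExc n f (a + 1) = antiExc n f a := by
  ext i
  by_cases hia : i = a
  · subst hia
    rw [hf.mem_antiExc_iff_of_fbar_eq_self ha h, hf.mem_antiExc_iff_of_fbar_eq_self ha h]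
  · exact mem_antiExc_succ_iff ha hia (by rwa [h, ne_comm])

theorem self_mem_antiExc (hf : IsBoundedAffine n f) (ha : a ∈ Icc (1 : ℤ) n)
    (h : fbar n f a ≠ a) : a ∈ antiExc n f a := by
  obtain ⟨j, hj, hja⟩ := hf.exists_fbar_eq ha
  refine mem_antiExc.mpr ⟨ha, Or.inr ⟨j, hj, hja, ?_⟩⟩
  rw [sub_self, Int.zero_emod]
  exact sub_emod_pos ha hj (by rintro rfl; exact h hja)

theorem fbar_notMem_antiExc (hf : IsBoundedAffine n f) (ha : a ∈ Icc (1 : ℤ) n)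
    (h : fbar n f a ≠ a) : fbar n f a ∉ antiExc n f a := by
  have hb := hf.fbar_mem_Icc ha
  rw [mem_antiExc, not_and, not_or]
  refine fun _ => ⟨fun hfix => h (hf.fbar_injOn hb ha ?_), ?_⟩
  · exact (hf.fbar_eq_self_iff hb).mpr (Or.inr hfix)
  · rintro ⟨j, hj, hja, hlt⟩
    obtain rfl := hf.fbar_injOn hj ha hja
    rw [sub_self, Int.zero_emod] at hlt
    exact lt_asymm (sub_emod_pos ha hb h) hlt

theorem antiExc_succ_of_fbar_ne (hf : IsBoundedAffine n f) (ha : a ∈ Icc (1 : ℤ) n)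
    (h : fbar n f a ≠ a) :
    antiExc n f (a + 1) = insert (fbar n f a) ((antiExc n f a).erase a) := by
  have hb := hf.fbar_mem_Icc ha
  ext i
  rw [mem_insert, mem_erase]
  by_cases hia : i = a
  · subst hia
    refine iff_of_false ?_ (by rintro (h' | ⟨h', -⟩) <;> [exact h h'.symm; exact h' rfl])
    rw [mem_antiExc]
    rintro ⟨-, hfix | ⟨j, hj, hji, hlt⟩⟩
    · exact h ((hf.fbar_eq_self_iff ha).mpr (Or.inr hfix))
    · exact lt_asymm (sub_succ_emod_lt ha hj (by rintro rfl; exact h hji)) hlt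
  by_cases hib : i = fbar n f a
  · subst hib
    exact iff_of_true (mem_antiExc.mpr ⟨hb, Or.inr ⟨a, ha, rfl, sub_succ_emod_lt ha hb h⟩⟩)
      (Or.inl rfl)
  · rw [mem_antiExc_succ_iff ha hia (Ne.symm hib)]
    simp only [hib, hia, false_or, ne_eq, not_false_eq_true, true_and]

theorem self_mem_antiExc_iff (hf : IsBoundedAffine n f) (ha : a ∈ Icc (1 : ℤ) n) :
    a ∈ antiExc n f a ↔ f a ≠ a := by
  by_cases h : fbar n f a = a
  · rw [hf.mem_antiExc_iff_of_fbar_eq_self ha h]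
    have := (hf.fbar_eq_self_iff ha).mp h
    rw [mem_Icc] at ha
    omega
  · exact iff_of_true (hf.self_mem_antiExc ha h)
      fun hfix => h ((hf.fbar_eq_self_iff ha).mpr (Or.inl hfix))

theorem antiExc_succ_of_notMem (hf : IsBoundedAffine n f) (ha : a ∈ Icc (1 : ℤ) n)
    (h : a ∉ antiExc n f a) : antiExc n f (a + 1) = antiExc n f a := by
  have hfix : f a = a := by
    by_contra hne
    exact h ((hf.self_mem_antiExc_iff ha).mpr hne)
  exact hf.antiExc_succ_of_fbar_eq_self ha ((hf.fbar_eq_self_iff ha).mpr (Or.inl hfix))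

theorem antiExc_succ_of_mem (hf : IsBoundedAffine n f) (ha : a ∈ Icc (1 : ℤ) n)
    (h : a ∈ antiExc n f a) :
    antiExc n f (a + 1) = insert (fbar n f a) ((antiExc n f a).erase a) := by
  by_cases hb : fbar n f a = a
  · rw [hf.antiExc_succ_of_fbar_eq_self ha hb, hb, insert_erase h]
  · exact hf.antiExc_succ_of_fbar_ne ha hb

theorem card_antiExc_succ (hf : IsBoundedAffine n f) (ha : a ∈ Icc (1 : ℤ) n) :
    #(antiExc n f (a + 1)) = #(antiExc n f a) := by
  by_cases hb : fbar n f a = a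
  · rw [hf.antiExc_succ_of_fbar_eq_self ha hb]
  · rw [hf.antiExc_succ_of_fbar_ne ha hb,
      card_insert_of_notMem fun h => hf.fbar_notMem_antiExc ha hb (mem_of_mem_erase h),
      card_erase_add_one (hf.self_mem_antiExc ha hb)]

theorem gnAssoc_antiExc (hf : IsBoundedAffine n f) : GNAssoc n (antiExc n f) f := by
  intro i hi
  refine ⟨fun _ hnot => ?_, fun heq hmem => ?_, fun hne => ?_⟩
  · by_contra hfix
    exact hnot ((hf.self_mem_antiExc_iff hi).mpr hfix)
  · by_contra hfix
    have hb : fbar n f i ≠ i := by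
      rw [ne_eq, hf.fbar_eq_self_iff hi, not_or]
      exact ⟨(hf.self_mem_antiExc_iff hi).mp hmem, hfix⟩
    rw [← heq, hf.antiExc_succ_of_fbar_ne hi hb] at hmem
    simp [Ne.symm hb] at hmem
  · have hb : fbar n f i ≠ i := fun h => hne (hf.antiExc_succ_of_fbar_eq_self hi h)
    exact ⟨hb, hf.antiExc_succ_of_fbar_ne hi hb⟩

theorem antiExc_one (hf : IsBoundedAffine n f) :
    antiExc n f 1 = {j ∈ Icc (1 : ℤ) n | (n : ℤ) < f j}.image (fbar n f) := by
  ext i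
  rw [mem_antiExc, mem_image]
  constructor
  · rintro ⟨hi, hfix | ⟨j, hj, hji, hlt⟩⟩
    · have hgt : (n : ℤ) < f i := by rw [mem_Icc] at hi; omega
      exact ⟨i, mem_filter.mpr ⟨hi, hgt⟩, (hf.fbar_eq_self_iff hi).mpr (Or.inr hfix)⟩
    · refine ⟨j, mem_filter.mpr ⟨hj, ?_⟩, hji⟩
      have h1 : (1 : ℤ) ∈ Icc (1 : ℤ) n := by rw [mem_Icc] at hi ⊢; omega
      rw [sub_emod_eq_ite h1 hi, sub_emod_eq_ite h1 hj] at hlt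
      rw [hf.fbar_eq_ite hj] at hji
      have := hf.le_map j
      rw [mem_Icc] at hi hj
      split_ifs at hlt hji <;> omega
  · rintro ⟨j, hj, rfl⟩
    obtain ⟨hj, hgt⟩ := mem_filter.mp hj
    refine ⟨hf.fbar_mem_Icc hj, ?_⟩
    by_cases hfix : f j = j + n
    · left
      rwa [(hf.fbar_eq_self_iff hj).mpr (Or.inr hfix)]
    · right
      refine ⟨j, hj, rfl, ?_⟩
      have h1 : (1 : ℤ) ∈ Icc (1 : ℤ) n := by rw [mem_Icc] at hj ⊢; omega
      rw [sub_emod_eq_ite h1 (hf.fbar_mem_Icc hj), sub_emod_eq_ite h1 hj, hf.fbar_eq_ite hj]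
      have := hf.map_le j
      rw [mem_Icc] at hj
      split_ifs <;> omega

end IsBoundedAffine

namespace IsBAP

theorem card_filter_lt (hf : IsBAP n k f) (hn : 0 < n) :
    #{j ∈ Icc (1 : ℤ) n | (n : ℤ) < f j} = k := by
  have hb := hf.isBoundedAffine
  have hsplit : ∀ j ∈ Icc (1 : ℤ) n,
      f j - j = (fbar n f j - j) + if (n : ℤ) < f j then (n : ℤ) else 0 := by
    intro j hj
    rw [hb.fbar_eq_ite hj]
    split_ifs <;> omega
  have hperm : ∑ j ∈ Icc (1 : ℤ) n, fbar n f j = ∑ j ∈ Icc (1 : ℤ) n, j := by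
    conv_rhs => rw [← hb.image_fbar]
    rw [sum_image hb.fbar_injOn]
  have hsum := hf.2.2.2
  rw [sum_congr rfl hsplit, sum_add_distrib, sum_sub_distrib, hperm, sub_self, zero_add,
    ← sum_filter, sum_const, nsmul_eq_mul] at hsum
  exact_mod_cast mul_right_cancel₀ (by omega) hsum

theorem card_antiExc (hf : IsBAP n k f) (ha : a ∈ Icc (1 : ℤ) n) : #(antiExc n f a) = k := by
  have hb := hf.isBoundedAffine
  obtain ⟨h1, hle⟩ := mem_Icc.mp ha
  clear ha
  induction a, h1 using Int.leInduction with
  | base =>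
    have hinj := hb.fbar_injOn.mono (coe_subset.mpr (filter_subset (fun j => (n : ℤ) < f j) _))
    rw [hb.antiExc_one, card_image_of_injOn hinj, hf.card_filter_lt (by omega)]
  | succ a h1 ih =>
    rw [hb.card_antiExc_succ (mem_Icc.mpr ⟨h1, by omega⟩), ih (by omega)]

end IsBAP

end AntiExceedance

/-- For a bounded affine permutation `f` of type `(k,n)`, the anti-exceedance
sets `I_a(f)` all have `k` elements, and `(I_1(f),…,I_n(f))` is a Grassmann necklace of type
`(k,n)` whose associated bounded affine permutation is `f`: with indices mod `n`, if
`i ∉ I_i(f)` then `I_{i+1}(f) = I_i(f)`, and if `i ∈ I_i(f)` then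
`I_{i+1}(f) = (I_i(f) ∖ {i}) ∪ {f̄(i)}`. -/
theorem antiExceedance_is_GrassmannNecklace (n k : ℕ) (f : ℤ → ℤ) (hf : IsBAP n k f) :
    (∀ a ∈ Finset.Icc (1 : ℤ) (n : ℤ), (antiExc n f a).card = k) ∧
    IsGN n k (antiExc n f) ∧
    GNAssoc n (antiExc n f) f ∧
    ∀ i ∈ Finset.Icc (1 : ℤ) (n : ℤ),
      (i ∉ antiExc n f i → antiExc n f (i + 1) = antiExc n f i) ∧
      (i ∈ antiExc n f i →
        antiExc n f (i + 1) = insert (fbar n f i) ((antiExc n f i).erase i)) := by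
  have hb := hf.isBoundedAffine
  have hcard : ∀ a ∈ Icc (1 : ℤ) n, #(antiExc n f a) = k := fun _ ha => hf.card_antiExc ha
  have hstep : ∀ i ∈ Icc (1 : ℤ) n,
      (i ∉ antiExc n f i → antiExc n f (i + 1) = antiExc n f i) ∧
      (i ∈ antiExc n f i →
        antiExc n f (i + 1) = insert (fbar n f i) ((antiExc n f i).erase i)) :=
    fun i hi => ⟨hb.antiExc_succ_of_notMem hi, hb.antiExc_succ_of_mem hi⟩
  refine ⟨hcard, ⟨antiExc_periodic, fun i hi => ?_⟩, hb.gnAssoc_antiExc, hstep⟩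
  exact ⟨antiExc_subset, hcard i hi, fun h => ⟨_, hb.fbar_mem_Icc hi, (hstep i hi).2 h⟩,
    (hstep i hi).1⟩
end
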